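/- arXiv:2111.13555 — 2 statements merged into one kernel-verified Lean document; each statement's English description precedes it below -/
import Mathlib

section
/- Let G = (V_1 ∪ … ∪ V_k, E) be a k-partite k-uniform hypergraph. If G is vertex-separable, then G is representable as an axis-parallel point line cover instance in ℝ^k: there is an injection from E to points of ℝ^k and an injection from V to axis-parallel lines (V_i to lines in direction i) such that v ∈ e if and only if the line of v contains the point of e. -/
/-!
Coordinate `j` of the point of a hyperedge `e` labels the connected component of `e` in the graph
`G_j` on hyperedges, and a vertex `v` gets in each coordinate `j ≠ part v` the label of the
hyperedges through it, which all lie in one component of `G_j` since they share `v`. This makes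
every incidence geometric. Two `G_j`-connected hyperedges are joined by a path avoiding `V_j`, so if
`V_j` separates two vertices of one part, their labels in coordinate `j` differ. Hence distinct
vertices of one part get distinct lines, and if the point of `e` lies on the line of `v`, then `v`
cannot be separated from the vertex of `e` in its part, so the two coincide.
-/

/-- A `k`-partite `k`-uniform hypergraph: vertices `V` with parts indexed by `Fin k`,
hyperedges indexed by `E`, each hyperedge selecting exactly one vertex per part. -/
structure KHypergraph (k : ℕ) (V E : Type) where
  part : V → Fin k
  vert : E → Fin k → V
  hpart : ∀ e i, part (vert e i) = i

namespace KHypergraph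

variable {k : ℕ} {V E : Type}

/-- Vertex `v` belongs to hyperedge `e`. -/
def Mem (G : KHypergraph k V E) (v : V) (e : E) : Prop :=
  G.vert e (G.part v) = v

/-- Two vertices are adjacent if they are both contained in a common hyperedge. -/
def Adj (G : KHypergraph k V E) (u v : V) : Prop :=
  ∃ e : E, G.Mem u e ∧ G.Mem v e

/-- `l` is an `s`–`t` path: a nonempty sequence of vertices starting at `s`, ending at `t`,
with consecutive vertices contained in a common hyperedge. -/
def IsPath (G : KHypergraph k V E) (s t : V) (l : List V) : Prop :=
  l.Chain' G.Adj ∧ l.head? = some s ∧ l.getLast? = some t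

/-- Vertex separability: every two distinct vertices of the same part `V_i` can be
separated by removing some part `V_j`, `j ≠ i`. -/
def VertexSeparable (G : KHypergraph k V E) : Prop :=
  ∀ v v' : V, v ≠ v' → G.part v = G.part v' →
    ∃ j : Fin k, j ≠ G.part v ∧
      ∀ l : List V, G.IsPath v v' l → ∃ w ∈ l, G.part w = j

/-- Edge separability: every two distinct hyperedges can be separated by removing
some part `V_j`. -/
def EdgeSeparable (G : KHypergraph k V E) : Prop :=
  ∀ e e' : E, G.vert e ≠ G.vert e' →
    ∃ j : Fin k, ∀ (v v' : V) (l : List V), G.Mem v e → G.Mem v' e' →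
      G.IsPath v v' l → ∃ w ∈ l, G.part w = j

/-- The axis-parallel line in `ℝ^k` representing a vertex `v` of part `i = G.part v`:
all coordinates `j ≠ i` are fixed to `L v j`, coordinate `i` is free. -/
def lineOf (G : KHypergraph k V E) (L : V → Fin k → ℝ) (v : V) : Set (Fin k → ℝ) :=
  {x | ∀ j : Fin k, j ≠ G.part v → x j = L v j}

/-- `(p, L)` is an axis-parallel point line cover representation of `G` in `ℝ^k`:
hyperedges map to pairwise distinct points, vertices map to pairwise distinct
axis-parallel lines (part `V_i` to direction `i`), and hypergraph incidence coincides
with geometric incidence. -/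
def Represents (G : KHypergraph k V E) (p : E → Fin k → ℝ) (L : V → Fin k → ℝ) : Prop :=
  Function.Injective p ∧
  (∀ v v' : V, v ≠ v' → G.lineOf L v ≠ G.lineOf L v') ∧
  (∀ (v : V) (e : E), G.Mem v e ↔ p e ∈ G.lineOf L v)

/-- The auxiliary graph `G_i` on the hyperedges: `e` and `e'` are adjacent iff they
share a vertex in a part `V_j` with `j ≠ i`. -/
def GiAdj (G : KHypergraph k V E) (i : Fin k) (e e' : E) : Prop :=
  ∃ v : V, G.Mem v e ∧ G.Mem v e' ∧ G.part v ≠ i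

end KHypergraph

namespace KHypergraph

variable {k : ℕ} {V E : Type} (G : KHypergraph k V E)

lemma mem_vert (e : E) (i : Fin k) : G.Mem (G.vert e i) e := by
  rw [Mem, G.hpart]

instance (j : Fin k) : Std.Symm (G.GiAdj j) :=
  ⟨fun _ _ ⟨v, he, he', hv⟩ => ⟨v, he', he, hv⟩⟩

lemma isPath_singleton (v : V) : G.IsPath v v [v] :=
  ⟨List.isChain_singleton v, rfl, rfl⟩

lemma IsPath.cons {G : KHypergraph k V E} {u v t : V} {l : List V} (huv : G.Adj u v)
    (h : G.IsPath v t l) : G.IsPath u t (u :: l) := by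
  obtain ⟨hc, hh, hl⟩ := h
  cases l with
  | nil => simp at hh
  | cons w l =>
    obtain rfl : w = v := by simpa using hh
    exact ⟨List.isChain_cons_cons.2 ⟨huv, hc⟩, rfl, by rwa [List.getLast?_cons_cons]⟩

lemma exists_isPath_avoiding_of_reflTransGen {j : Fin k} {e e' : E}
    (h : Relation.ReflTransGen (G.GiAdj j) e e') {u u' : V} (hu : G.Mem u e)
    (hu' : G.Mem u' e') (hju : G.part u ≠ j) (hju' : G.part u' ≠ j) :
    ∃ l, G.IsPath u u' l ∧ ∀ w ∈ l, G.part w ≠ j := by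
  induction h using Relation.ReflTransGen.head_induction_on generalizing u with
  | refl => exact ⟨[u, u'], (G.isPath_singleton u').cons ⟨_, hu, hu'⟩, by simp [hju, hju']⟩
  | head hee₁ _ ih =>
    obtain ⟨w, hwe, hwe₁, hjw⟩ := hee₁
    obtain ⟨l, hl, hlj⟩ := ih hwe₁ hjw
    exact ⟨u :: l, hl.cons ⟨_, hu, hwe⟩, List.forall_mem_cons.2 ⟨hju, hlj⟩⟩

/-- An isolated vertex is labelled by itself, so that distinct isolated vertices of one part still
get distinct lines. -/
noncomputable def vertexLabel (j : Fin k) (v : V) : Quot (G.GiAdj j) ⊕ V :=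
  open Classical in
  if h : ∃ e, G.Mem v e then .inl (Quot.mk _ h.choose) else .inr v

lemma vertexLabel_of_mem {j : Fin k} {v : V} {e : E} (hv : G.Mem v e) (hj : G.part v ≠ j) :
    G.vertexLabel j v = .inl (Quot.mk _ e) := by
  have h : ∃ e, G.Mem v e := ⟨e, hv⟩
  rw [vertexLabel, dif_pos h]
  exact congrArg _ (Quot.sound ⟨v, h.choose_spec, hv, hj⟩)

lemma vertexLabel_ne_of_separates {j : Fin k} {v v' : V} (hne : v ≠ v') (hj : G.part v ≠ j)
    (hj' : G.part v' ≠ j) (hsep : ∀ l, G.IsPath v v' l → ∃ w ∈ l, G.part w = j) :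
    G.vertexLabel j v ≠ G.vertexLabel j v' := by
  by_cases h : ∃ e, G.Mem v e <;> by_cases h' : ∃ e, G.Mem v' e
  · obtain ⟨e, he⟩ := h
    obtain ⟨e', he'⟩ := h'
    rw [G.vertexLabel_of_mem he hj, G.vertexLabel_of_mem he' hj']
    intro heq
    have hconn := Quot.eq.1 (Sum.inl_injective heq)
    rw [Relation.EqvGen.eqvGen_eq_reflTransGen] at hconn
    obtain ⟨l, hl, hlj⟩ := G.exists_isPath_avoiding_of_reflTransGen hconn he he' hj hj'
    obtain ⟨w, hw, hwj⟩ := hsep l hl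
    exact hlj w hw hwj
  · simp [vertexLabel, h, h']
  · simp [vertexLabel, h, h']
  · simpa [vertexLabel, h, h'] using hne

lemma exists_vertexLabel_ne (hsep : G.VertexSeparable) {v v' : V} (hne : v ≠ v')
    (hpart : G.part v = G.part v') : ∃ j ≠ G.part v, G.vertexLabel j v ≠ G.vertexLabel j v' := by
  obtain ⟨j, hj, hpath⟩ := hsep v v' hne hpart
  exact ⟨j, hj, G.vertexLabel_ne_of_separates hne hj.symm (hpart ▸ hj.symm) hpath⟩

lemma self_mem_lineOf (L : V → Fin k → ℝ) (v : V) : L v ∈ G.lineOf L v :=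
  fun _ _ => rfl

lemma part_eq_of_lineOf_eq {L : V → Fin k → ℝ} {v v' : V} (h : G.lineOf L v = G.lineOf L v') :
    G.part v = G.part v' := by
  by_contra hne
  have hcoord : ∀ x ∈ G.lineOf L v, x (G.part v) = L v' (G.part v) :=
    fun x hx => (h ▸ hx) _ hne
  have hshift := hcoord (Function.update (L v) (G.part v) (L v (G.part v) + 1))
    fun j hj => Function.update_of_ne hj _ _
  rw [Function.update_self, ← hcoord _ (G.self_mem_lineOf L v)] at hshift
  linarith

theorem represents_of_mem_lineOf (hdist : Function.Injective G.vert) {p : E → Fin k → ℝ}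
    {L : V → Fin k → ℝ} (hinc : ∀ v e, G.Mem v e → p e ∈ G.lineOf L v)
    (hsep : ∀ v v', G.part v = G.part v' → L v ∈ G.lineOf L v' → v = v') :
    G.Represents p L := by
  have hmem : ∀ v e, p e ∈ G.lineOf L v → G.Mem v e := by
    intro v e hv
    have hpart : G.part v = G.part (G.vert e (G.part v)) := (G.hpart e _).symm
    have hon : L v ∈ G.lineOf L (G.vert e (G.part v)) := fun j hj =>
      (hv j (hpart ▸ hj)).symm.trans (hinc _ e (G.mem_vert e _) j hj)
    exact (hsep _ _ hpart hon).symm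
  refine ⟨fun e e' hp => hdist (funext fun i => ?_), fun v v' hne hL => ?_,
    fun v e => ⟨hinc v e, hmem v e⟩⟩
  · have hi := hmem _ e' (hp ▸ hinc _ e (G.mem_vert e i))
    rwa [Mem, G.hpart, eq_comm] at hi
  · exact hne (hsep v v' (G.part_eq_of_lineOf_eq hL) (hL ▸ G.self_mem_lineOf L v))

end KHypergraph

/-- If a (finite) `k`-partite `k`-uniform hypergraph, with hyperedges pairwise distinct
as vertex sets, is vertex-separable, then it is representable as an axis-parallel point
line cover instance in `ℝ^k`. -/
theorem stmt7 {k : ℕ} {V E : Type} [Finite V] [Finite E] (G : KHypergraph k V E)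
    (hdist : Function.Injective G.vert) (hsep : G.VertexSeparable) :
    ∃ (p : E → Fin k → ℝ) (L : V → Fin k → ℝ), G.Represents p L := by
  have hcode : ∀ j : Fin k, ∃ c : Quot (G.GiAdj j) ⊕ V → ℝ, Function.Injective c := fun j =>
    let ⟨g, hg⟩ := Countable.exists_injective_nat (Quot (G.GiAdj j) ⊕ V)
    ⟨_, Nat.cast_injective.comp hg⟩
  choose c hc using hcode
  refine ⟨fun e j => c j (.inl (Quot.mk _ e)), fun v j => c j (G.vertexLabel j v),
    G.represents_of_mem_lineOf hdist (fun v e hv j hj => ?_) (fun v v' hpart hv => ?_)⟩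
  · rw [G.vertexLabel_of_mem hv hj.symm]
  · by_contra hne
    obtain ⟨j, hj, hlabel⟩ := G.exists_vertexLabel_ne hsep hne hpart
    exact hlabel (hc j (hv j (hpart ▸ hj)))
end

section
/- Let G be a binom(d,ℓ)-partite uniform hypergraph with parts V_I indexed by ℓ-subsets I of [d], where ℓ ≤ d−1. Then G is representable as a set of distinct points in ℝ^d covered by distinct axis-aligned affine ℓ-dimensional subspaces (part V_I represented by subspaces whose free coordinates are exactly those in I), with hypergraph incidence coinciding with geometric incidence, if and only if G is vertex-separable, i.e., for all distinct v, v' in the same part V_I there exists j ∈ [d] \ I such that every v–v' path contains a vertex in some part V_J with j ∈ J. -/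
/-- A `binom(d,ℓ)`-partite uniform hypergraph: parts indexed by the `ℓ`-element subsets
of `[d]`, each hyperedge containing exactly one vertex of each part. -/
structure DLHypergraph (d l : ℕ) (V E : Type) where
  part : V → {I : Finset (Fin d) // I.card = l}
  vert : E → {I : Finset (Fin d) // I.card = l} → V
  hpart : ∀ e I, part (vert e I) = I

namespace DLHypergraph

variable {d l : ℕ} {V E : Type}

/-- Vertex `v` belongs to hyperedge `e`. -/
def Mem (G : DLHypergraph d l V E) (v : V) (e : E) : Prop :=
  G.vert e (G.part v) = v

/-- Two vertices are adjacent if they are both contained in a common hyperedge. -/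
def Adj (G : DLHypergraph d l V E) (u v : V) : Prop :=
  ∃ e : E, G.Mem u e ∧ G.Mem v e

/-- `l` is an `s`–`t` path. -/
def IsPath (G : DLHypergraph d l V E) (s t : V) (L : List V) : Prop :=
  L.Chain' G.Adj ∧ L.head? = some s ∧ L.getLast? = some t

/-- Vertex separability: for distinct `v, v'` in the same part `V_I` there is a
coordinate `j ∉ I` such that every `v`–`v'` path contains a vertex in some part `V_J`
with `j ∈ J`. -/
def VertexSeparable (G : DLHypergraph d l V E) : Prop :=
  ∀ v v' : V, v ≠ v' → G.part v = G.part v' →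
    ∃ j : Fin d, j ∉ (G.part v).val ∧
      ∀ L : List V, G.IsPath v v' L → ∃ w ∈ L, j ∈ (G.part w).val

/-- Edge separability: for distinct hyperedges `e, e'` there is a coordinate `j` such
that every `e`–`e'` path contains a vertex in some part `V_J` with `j ∈ J`. -/
def EdgeSeparable (G : DLHypergraph d l V E) : Prop :=
  ∀ e e' : E, G.vert e ≠ G.vert e' →
    ∃ j : Fin d, ∀ (v v' : V) (L : List V), G.Mem v e → G.Mem v' e' →
      G.IsPath v v' L → ∃ w ∈ L, j ∈ (G.part w).val

/-- The axis-aligned affine `ℓ`-subspace of `ℝ^d` representing vertex `v`: coordinates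
in the free set `G.part v` are free, all other coordinates are fixed to values of `C v`. -/
def subspaceOf (G : DLHypergraph d l V E) (C : V → Fin d → ℝ) (v : V) : Set (Fin d → ℝ) :=
  {x | ∀ j : Fin d, j ∉ (G.part v).val → x j = C v j}

/-- `(p, C)` is a point subspace cover representation of `G` in `ℝ^d`: hyperedges map
to pairwise distinct points, vertices to pairwise distinct axis-aligned `ℓ`-subspaces
(part `V_I` to subspaces with free coordinate set `I`), preserving and reflecting
incidence. -/
def Represents (G : DLHypergraph d l V E) (p : E → Fin d → ℝ) (C : V → Fin d → ℝ) : Prop :=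
  Function.Injective p ∧
  (∀ v v' : V, v ≠ v' → G.subspaceOf C v ≠ G.subspaceOf C v') ∧
  (∀ (v : V) (e : E), G.Mem v e ↔ p e ∈ G.subspaceOf C v)

end DLHypergraph

/-!
If `(p, C)` represents `G`, every hyperedge containing two vertices whose parts avoid `j`
forces their subspaces to agree in coordinate `j`, so `C v j` is constant along paths avoiding
the parts `V_J` with `j ∈ J`; two distinct subspaces of the same part differ in some fixed
coordinate `j ∉ I`, which then separates them. Conversely, give `v` as `j`-th coordinate a real
label of its connected component in the subhypergraph induced by the parts avoiding `j`, and give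
the point of `e` as `j`-th coordinate the label of its vertex in a part `V_I` with `j ∉ I` (which
exists since `ℓ < d`). Vertex separability is exactly what makes incidence reflected and the
subspaces distinct.
-/

theorem axisSubspace_eq_iff {ι R : Type*} [DecidableEq ι] [Nontrivial R] {I I' : Finset ι}
    {c c' : ι → R} :
    {x : ι → R | ∀ j ∉ I, x j = c j} = {x | ∀ j ∉ I', x j = c' j} ↔
      I = I' ∧ ∀ j ∉ I, c j = c' j := by
  constructor
  · intro h
    have hsub : ∀ {I I' : Finset ι} {c c' : ι → R},
        {x : ι → R | ∀ j ∉ I, x j = c j} = {x | ∀ j ∉ I', x j = c' j} → I ⊆ I' := by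
      intro I I' c c' h j hjI
      by_contra hjI'
      obtain ⟨y, hy⟩ := exists_ne (c' j)
      -- moving the free coordinate `j` of `c` stays in the first subspace but leaves the second
      have hx : Function.update c j y ∈ {x : ι → R | ∀ j ∉ I, x j = c j} := fun i hi => by
        rw [Function.update_of_ne (ne_of_mem_of_not_mem hjI hi).symm]
      rw [h] at hx
      exact hy (by simpa using hx j hjI')
    have hc : c ∈ {x : ι → R | ∀ j ∉ I', x j = c' j} := h ▸ fun _ _ => rfl
    have hII' : I = I' := (hsub h).antisymm (hsub h.symm)
    exact ⟨hII', fun j hj => hc j (hII' ▸ hj)⟩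
  · rintro ⟨rfl, hc⟩
    ext x
    exact forall₂_congr fun j hj => by rw [hc j hj]

theorem exists_real_eq_iff_of_equivalence {α ι : Type*} [Countable α] (r : ι → α → α → Prop)
    (hr : ∀ i, Equivalence (r i)) : ∃ C : α → ι → ℝ, ∀ i a b, C a i = C b i ↔ r i a b := by
  choose f hf using fun i => exists_injective_nat (Quotient ⟨r i, hr i⟩)
  refine ⟨fun a i => f i (Quotient.mk _ a), fun i a b => ?_⟩
  rw [Nat.cast_inj, (hf i).eq_iff, Quotient.eq]
  rfl

theorem Finset.exists_card_eq_notMem {α : Type*} [Fintype α] [DecidableEq α] {l : ℕ}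
    (hl : l ≤ Fintype.card α - 1) (a : α) : ∃ I : Finset α, I.card = l ∧ a ∉ I := by
  obtain ⟨I, hI, hcard⟩ := Finset.exists_subset_card_eq (s := Finset.univ.erase a) (n := l)
    (by rwa [Finset.card_erase_of_mem (Finset.mem_univ a), Finset.card_univ])
  exact ⟨I, hcard, fun ha => Finset.notMem_erase a _ (hI ha)⟩

namespace DLHypergraph

variable {d l : ℕ} {V E : Type} {G : DLHypergraph d l V E}

theorem Adj.symm {u v : V} (h : G.Adj u v) : G.Adj v u :=
  let ⟨e, hu, hv⟩ := h; ⟨e, hv, hu⟩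

theorem mem_vert (G : DLHypergraph d l V E) (e : E) (I : {I : Finset (Fin d) // I.card = l}) :
    G.Mem (G.vert e I) e := by
  rw [Mem, G.hpart]

theorem subspaceOf_eq_subspaceOf_iff {C : V → Fin d → ℝ} {v v' : V} :
    G.subspaceOf C v = G.subspaceOf C v' ↔
      G.part v = G.part v' ∧ ∀ j ∉ (G.part v).val, C v j = C v' j := by
  rw [subspaceOf, subspaceOf, axisSubspace_eq_iff, Subtype.ext_iff]

/-- Adjacency inside the subhypergraph induced by the parts `V_J` with `j ∉ J`. -/
def AdjAvoiding (G : DLHypergraph d l V E) (j : Fin d) (u w : V) : Prop :=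
  G.Adj u w ∧ j ∉ (G.part u).val ∧ j ∉ (G.part w).val

theorem AdjAvoiding.symm {j : Fin d} {u w : V} (h : G.AdjAvoiding j u w) :
    G.AdjAvoiding j w u :=
  ⟨h.1.symm, h.2.2, h.2.1⟩

def ReachAvoiding (G : DLHypergraph d l V E) (j : Fin d) : V → V → Prop :=
  Relation.ReflTransGen (G.AdjAvoiding j)

theorem reachAvoiding_equivalence (G : DLHypergraph d l V E) (j : Fin d) :
    Equivalence (G.ReachAvoiding j) where
  refl _ := .refl
  symm h :=
    Relation.reflTransGen_swap.mp (Relation.ReflTransGen.mono (fun _ _ => AdjAvoiding.symm) _ _ h)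
  trans := .trans

theorem reachAvoiding_iff_exists_path {j : Fin d} {a b : V} (ha : j ∉ (G.part a).val) :
    G.ReachAvoiding j a b ↔ ∃ L, G.IsPath a b L ∧ ∀ w ∈ L, j ∉ (G.part w).val := by
  constructor
  · intro h
    obtain ⟨L, hchain, hlast⟩ := List.exists_isChain_cons_of_relationReflTransGen h
    have havoid : ∀ w ∈ a :: L, j ∉ (G.part w).val :=
      hchain.induction _ _ (fun _ _ hxy _ => hxy.2.2) fun _ => ha
    refine ⟨a :: L, ⟨hchain.imp fun _ _ hxy => hxy.1, rfl, ?_⟩, havoid⟩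
    rw [List.getLast?_eq_getLast_of_ne_nil (List.cons_ne_nil _ _), hlast]
  · rintro ⟨_ | ⟨a', L⟩, ⟨hchain, hhead, hlast⟩, havoid⟩
    · simp at hhead
    obtain rfl : a' = a := by simpa using hhead
    refine List.relationReflTransGen_of_exists_isChain_cons L ?_ ?_
    · exact hchain.imp_of_mem_imp fun x y hx hy hxy => ⟨hxy, havoid x hx, havoid y hy⟩
    · simpa [List.getLast?_eq_getLast_of_ne_nil] using hlast

theorem vertexSeparable_iff :
    G.VertexSeparable ↔ ∀ v v' : V, v ≠ v' → G.part v = G.part v' →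
      ∃ j ∉ (G.part v).val, ¬ G.ReachAvoiding j v v' := by
  refine forall₄_congr fun v v' _ _ => exists_congr fun j => and_congr_right fun hj => ?_
  rw [reachAvoiding_iff_exists_path hj]
  push Not
  rfl

theorem coord_eq_of_reachAvoiding {p : E → Fin d → ℝ} {C : V → Fin d → ℝ}
    (hinc : ∀ v e, G.Mem v e → p e ∈ G.subspaceOf C v) {j : Fin d} {a b : V}
    (h : G.ReachAvoiding j a b) : C a j = C b j := by
  induction h with
  | refl => rfl
  | tail _ hbc ih =>
    obtain ⟨⟨e, hb, hc⟩, hjb, hjc⟩ := hbc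
    rw [ih, ← hinc _ e hb j hjb, hinc _ e hc j hjc]

theorem Represents.vertexSeparable {p : E → Fin d → ℝ} {C : V → Fin d → ℝ}
    (h : G.Represents p C) : G.VertexSeparable := by
  obtain ⟨-, hdistinct, hinc⟩ := h
  refine vertexSeparable_iff.mpr fun v v' hne hpart => ?_
  have hcoord : ¬ ∀ j ∉ (G.part v).val, C v j = C v' j := fun hC =>
    hdistinct v v' hne (subspaceOf_eq_subspaceOf_iff.mpr ⟨hpart, hC⟩)
  push Not at hcoord
  obtain ⟨j, hj, hCj⟩ := hcoord
  exact ⟨j, hj, fun hreach => hCj (coord_eq_of_reachAvoiding (fun v e => (hinc v e).mp) hreach)⟩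

theorem injective_of_mem_iff {X : Type*} {p : E → X} {S : V → Set X}
    (hdist : Function.Injective G.vert) (hinc : ∀ v e, G.Mem v e ↔ p e ∈ S v) :
    Function.Injective p := by
  intro e e' h
  refine hdist (funext fun I => ?_)
  have hmem : G.Mem (G.vert e I) e' := (hinc _ e').mpr (h ▸ (hinc _ e).mp (G.mem_vert e I))
  rw [← hmem, G.hpart]

def point (G : DLHypergraph d l V E) (C : V → Fin d → ℝ)
    (I : Fin d → {I : Finset (Fin d) // I.card = l}) (e : E) : Fin d → ℝ :=
  fun j => C (G.vert e (I j)) j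

section Construction

variable {C : V → Fin d → ℝ} {I : Fin d → {I : Finset (Fin d) // I.card = l}}

theorem point_apply_of_mem (hC : ∀ j a b, C a j = C b j ↔ G.ReachAvoiding j a b)
    (hI : ∀ j, j ∉ (I j).val) {v : V} {e : E} {j : Fin d} (hv : G.Mem v e)
    (hj : j ∉ (G.part v).val) : G.point C I e j = C v j :=
  (hC j _ v).mpr (.single ⟨⟨e, G.mem_vert e (I j), hv⟩, by rw [G.hpart]; exact hI j, hj⟩)

theorem mem_iff_point_mem_subspaceOf (hC : ∀ j a b, C a j = C b j ↔ G.ReachAvoiding j a b)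
    (hI : ∀ j, j ∉ (I j).val) (hsep : G.VertexSeparable) (v : V) (e : E) :
    G.Mem v e ↔ G.point C I e ∈ G.subspaceOf C v := by
  refine ⟨fun hv j hj => point_apply_of_mem hC hI hv hj, fun hx => ?_⟩
  by_contra hne
  obtain ⟨j, hj, hreach⟩ :=
    vertexSeparable_iff.mp hsep v _ (Ne.symm hne) (G.hpart e (G.part v)).symm
  have hju : j ∉ (G.part (G.vert e (G.part v))).val := by rwa [G.hpart]
  exact hreach ((hC j _ _).mp
    ((hx j hj).symm.trans (point_apply_of_mem hC hI (G.mem_vert e _) hju)))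

theorem subspaceOf_injective (hC : ∀ j a b, C a j = C b j ↔ G.ReachAvoiding j a b)
    (hsep : G.VertexSeparable) : Function.Injective (G.subspaceOf C) := by
  intro v v' h
  by_contra hne
  obtain ⟨hpart, hcoord⟩ := subspaceOf_eq_subspaceOf_iff.mp h
  obtain ⟨j, hj, hreach⟩ := vertexSeparable_iff.mp hsep v v' hne hpart
  exact hreach ((hC j v v').mp (hcoord j hj))

end Construction

theorem exists_represents_of_vertexSeparable [Finite V] (hl : l ≤ d - 1)
    (hdist : Function.Injective G.vert) (hsep : G.VertexSeparable) :
    ∃ p C, G.Represents p C := by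
  obtain ⟨C, hC⟩ :=
    exists_real_eq_iff_of_equivalence (fun j => G.ReachAvoiding j) G.reachAvoiding_equivalence
  choose I hIcard hI using Finset.exists_card_eq_notMem (α := Fin d) (by simpa using hl)
  have hinc := mem_iff_point_mem_subspaceOf (I := fun j => ⟨I j, hIcard j⟩) hC hI hsep
  exact ⟨G.point C _, C, injective_of_mem_iff hdist hinc,
    fun _ _ => (subspaceOf_injective hC hsep).ne, hinc⟩

end DLHypergraph

theorem stmt11_general {d l : ℕ} {V E : Type} [Finite V] (hl : l ≤ d - 1)
    (G : DLHypergraph d l V E) (hdist : Function.Injective G.vert) :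
    (∃ (p : E → Fin d → ℝ) (C : V → Fin d → ℝ), G.Represents p C) ↔
      G.VertexSeparable :=
  ⟨fun ⟨_, _, h⟩ => h.vertexSeparable, G.exists_represents_of_vertexSeparable hl hdist⟩

/-- A (finite) `binom(d,ℓ)`-partite uniform hypergraph with pairwise distinct
hyperedges and `ℓ ≤ d − 1` is representable as a point subspace cover instance in
`ℝ^d` (points covered by axis-aligned affine `ℓ`-subspaces, part `V_I` represented by
subspaces with free coordinate set `I`) if and only if it is vertex-separable. -/
theorem stmt11 {d l : ℕ} {V E : Type} [Finite V] [Finite E] (hl : l ≤ d - 1)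
    (G : DLHypergraph d l V E) (hdist : Function.Injective G.vert) :
    (∃ (p : E → Fin d → ℝ) (C : V → Fin d → ℝ), G.Represents p C) ↔
      G.VertexSeparable :=
  stmt11_general hl G hdist
end
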